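/- Assume condition (2.2) and the stability assumption (6.3) hold. Then for Δt = T/N and 1 ≤ n ≤ N: x^n + (1 − x^n)·2S/h ≤ ‖φ(Δt M)^n‖_∞ ≤ K + 4(K+1)S/h, where x = φ(−rΔt). -/

import Mathlib

/-- Tridiagonal matrix with diagonal `α`, subdiagonal `β` and superdiagonal `γ`. -/
def tridiag {m : ℕ} (α β γ : Fin m → ℝ) : Matrix (Fin m) (Fin m) ℝ :=
  Matrix.of fun i j =>
    if (i : ℕ) = j then α i
    else if (i : ℕ) = (j : ℕ) + 1 then β i
    else if (j : ℕ) = (i : ℕ) + 1 then γ i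
    else 0

/-- The `(m+1)×2` matrix whose only nonzero entry is `g` in the bottom-left position. -/
def Bmat {m : ℕ} (g : ℝ) : Matrix (Fin (m + 1)) (Fin 2) ℝ :=
  Matrix.of fun i j => if i = Fin.last m ∧ j = 0 then g else 0

/-- The `2×2` matrix both of whose rows equal `(−rS/h, r·s_{m+1}/h)`. -/
noncomputable def Cmat (r spen S h : ℝ) : Matrix (Fin 2) (Fin 2) ℝ :=
  Matrix.of fun _ j => if j = 0 then -(r * S) / h else r * spen / h

/-- The maximum norm of a real matrix: `‖X‖_∞ = max_i Σ_j |X i j|`. -/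
noncomputable def matMaxNorm {ι κ : Type*} [Fintype ι] [Fintype κ]
    (X : Matrix ι κ ℝ) : ℝ :=
  ⨆ i, ∑ j, |X i j|

/-- The logarithmic maximum norm `μ_∞[X] = max_i ( x_{ii} + Σ_{j≠i} |x_{ij}| )`. -/
noncomputable def logMaxNorm {ι : Type*} [Fintype ι] [DecidableEq ι]
    (X : Matrix ι ι ℝ) : ℝ :=
  ⨆ i, (X i i + ∑ j ∈ Finset.univ.erase i, |X i j|)

/-- `φ(Δt X) = (I − θΔt X)⁻¹ (I + (1−θ)Δt X)`. -/
noncomputable def phiM {ι : Type*} [Fintype ι] [DecidableEq ι] (θ dt : ℝ)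
    (X : Matrix ι ι ℝ) : Matrix ι ι ℝ :=
  (1 - (θ * dt) • X)⁻¹ * (1 + ((1 - θ) * dt) • X)

/-!
`φ(Δt M)` is block upper triangular with diagonal blocks `P = φ(Δt A)` and `φ(Δt C)`.
Since `C = -r Π` for the rank-one idempotent `Π = 𝟙 πᵀ`, `π = (S/h, -s/h)`, every power of
`φ(Δt C)` is `I + (xⁿ - 1) Π`; its second row has absolute sum `xⁿ + (1 - xⁿ) 2S/h`, which is
the lower bound. Writing `B = (A v) e₁ᵀ`, strict diagonal dominance of `A`, with margin `|γ_m|`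
in the last row, gives `‖v‖_∞ ≤ 1`, and the coupling block of `φ(Δt M)` becomes
`((P - I) v) ρᵀ`. The coupling block of the `n`-th power is then `(Pⁿ v - v) ρᵀ - dₙ πᵀ` with
`dₙ₊₁ = x dₙ + y (1 - x) (Pⁿ v - v)`, `y = (1 + θ r Δt)⁻¹`. As `|x| + y |1 - x| ≤ 1`, `dₙ` stays
within `max_k ‖Pᵏ v - v‖ ≤ K + 1`, and the upper bound follows by adding up rows.
-/

open Finset Matrix

section MaxNorm

variable {ι κ : Type*} [Fintype ι] [Fintype κ]

lemma sum_abs_le_matMaxNorm (X : Matrix ι κ ℝ) (i : ι) : ∑ j, |X i j| ≤ matMaxNorm X :=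
  le_ciSup (Set.finite_range fun i => ∑ j, |X i j|).bddAbove i

lemma matMaxNorm_nonneg (X : Matrix ι κ ℝ) : 0 ≤ matMaxNorm X :=
  Real.iSup_nonneg fun _ => sum_nonneg fun _ _ => abs_nonneg _

lemma matMaxNorm_le [Nonempty ι] {X : Matrix ι κ ℝ} {c : ℝ} (h : ∀ i, ∑ j, |X i j| ≤ c) :
    matMaxNorm X ≤ c :=
  ciSup_le h

lemma norm_mulVec_le_matMaxNorm (X : Matrix ι κ ℝ) (v : κ → ℝ) :
    ‖X *ᵥ v‖ ≤ matMaxNorm X * ‖v‖ := by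
  refine (pi_norm_le_iff_of_nonneg (by positivity [matMaxNorm_nonneg X])).2 fun i => ?_
  calc ‖(X *ᵥ v) i‖ ≤ ∑ j, |X i j| * ‖v j‖ := by
        simpa only [mulVec, dotProduct, Real.norm_eq_abs, abs_mul] using
          abs_sum_le_sum_abs (fun j => X i j * v j) univ
    _ ≤ ∑ j, |X i j| * ‖v‖ := by gcongr with j; exact norm_le_pi_norm v j
    _ ≤ matMaxNorm X * ‖v‖ := by
        rw [← sum_mul]; gcongr; exact sum_abs_le_matMaxNorm X i

lemma norm_mulVec_sub_le_of_norm_le_one {X : Matrix ι ι ℝ} {K : ℝ} (hX : matMaxNorm X ≤ K)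
    {v : ι → ℝ} (hv : ‖v‖ ≤ 1) : ‖X *ᵥ v - v‖ ≤ K + 1 :=
  (norm_sub_le _ _).trans (add_le_add ((norm_mulVec_le_matMaxNorm X v).trans
    ((mul_le_of_le_one_right (matMaxNorm_nonneg X) hv).trans hX)) hv)

lemma sum_abs_le_matMaxNorm_fromBlocks (X : Matrix ι ι ℝ) (Y : Matrix ι κ ℝ) (W : Matrix κ κ ℝ)
    (l : κ) : ∑ j, |W l j| ≤ matMaxNorm (fromBlocks X Y 0 W) := by
  simpa [Fintype.sum_sum_type] using sum_abs_le_matMaxNorm (fromBlocks X Y 0 W) (Sum.inr l)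

lemma matMaxNorm_fromBlocks_le [Nonempty ι] {X : Matrix ι ι ℝ} {Y : Matrix ι κ ℝ}
    {W : Matrix κ κ ℝ} {c : ℝ} (hXY : ∀ i, ∑ j, |X i j| + ∑ j, |Y i j| ≤ c)
    (hW : ∀ l, ∑ j, |W l j| ≤ c) : matMaxNorm (fromBlocks X Y 0 W) ≤ c :=
  matMaxNorm_le fun
    | .inl i => by simpa [Fintype.sum_sum_type] using hXY i
    | .inr l => by simpa [Fintype.sum_sum_type] using hW l

end MaxNorm

section DiagonalDominance

variable {ι : Type*} [Fintype ι] [DecidableEq ι]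

lemma diag_add_sum_abs_le_logMaxNorm (X : Matrix ι ι ℝ) (i : ι) :
    X i i + ∑ j ∈ univ.erase i, |X i j| ≤ logMaxNorm X :=
  le_ciSup (Set.finite_range fun i => X i i + ∑ j ∈ univ.erase i, |X i j|).bddAbove i

lemma add_diag_add_sum_abs_nonpos_of_logMaxNorm {r : ℝ} {A : Matrix ι ι ℝ}
    (hμ : logMaxNorm (r • (1 : Matrix ι ι ℝ) + A) ≤ 0) (i : ι) :
    r + A i i + ∑ j ∈ univ.erase i, |A i j| ≤ 0 := by
  have hoff : ∀ j ∈ univ.erase i, (r • (1 : Matrix ι ι ℝ) + A) i j = A i j := fun j hj => by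
    simp [one_apply_ne' (ne_of_mem_erase hj)]
  have := diag_add_sum_abs_le_logMaxNorm (r • (1 : Matrix ι ι ℝ) + A) i
  rw [sum_congr rfl fun j hj => congrArg abs (hoff j hj)] at this
  simpa using this.trans hμ

variable {r : ℝ} {A : Matrix ι ι ℝ}

lemma det_ne_zero_of_logMaxNorm_nonpos (hr : 0 < r)
    (hμ : logMaxNorm (r • (1 : Matrix ι ι ℝ) + A) ≤ 0) : A.det ≠ 0 := by
  refine det_ne_zero_of_sum_row_lt_diag fun i => ?_
  simp only [Real.norm_eq_abs]
  linarith [add_diag_add_sum_abs_nonpos_of_logMaxNorm hμ i, neg_le_abs (A i i)]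

lemma det_one_sub_smul_ne_zero_of_logMaxNorm_nonpos (hr : 0 < r)
    (hμ : logMaxNorm (r • (1 : Matrix ι ι ℝ) + A) ≤ 0) {c : ℝ} (hc : 0 ≤ c) :
    (1 - c • A).det ≠ 0 := by
  refine det_ne_zero_of_sum_row_lt_diag fun i => ?_
  have hoff : ∑ j ∈ univ.erase i, ‖(1 - c • A) i j‖ = c * ∑ j ∈ univ.erase i, |A i j| := by
    rw [mul_sum]
    refine sum_congr rfl fun j hj => ?_
    simp [one_apply_ne' (ne_of_mem_erase hj), abs_of_nonneg hc]
  have hdiag : (1 - c • A) i i = 1 - c * A i i := by simp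
  rw [hoff, hdiag, Real.norm_eq_abs]
  have := mul_le_mul_of_nonneg_left (add_diag_add_sum_abs_nonpos_of_logMaxNorm hμ i) hc
  nlinarith [le_abs_self (1 - c * A i i)]

lemma norm_le_one_of_mulVec_eq {v g : ι → ℝ} (hv : A *ᵥ v = g)
    (hdom : ∀ i, |g i| + ∑ j ∈ univ.erase i, |A i j| < |A i i|) : ‖v‖ ≤ 1 := by
  rcases isEmpty_or_nonempty ι with hι | hι
  · simp [Subsingleton.elim v 0]
  obtain ⟨i, -, hi⟩ := exists_max_image univ (fun i => |v i|) univ_nonempty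
  have hnorm : ‖v‖ = |v i| :=
    le_antisymm ((pi_norm_le_iff_of_nonneg (abs_nonneg _)).2 fun j => hi j (mem_univ j))
      (norm_le_pi_norm v i)
  have hrow : A i i * v i = g i - ∑ j ∈ univ.erase i, A i j * v j := by
    rw [← hv, mulVec, dotProduct, ← add_sum_erase _ _ (mem_univ i)]
    ring
  have hbound : |A i i| * |v i| ≤ |g i| + (∑ j ∈ univ.erase i, |A i j|) * |v i| := by
    rw [← abs_mul, hrow, sum_mul]
    refine (abs_sub _ _).trans (add_le_add_right ?_ _)
    refine (abs_sum_le_sum_abs _ _).trans (sum_le_sum fun j _ => ?_)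
    rw [abs_mul]
    exact mul_le_mul_of_nonneg_left (hi j (mem_univ j)) (abs_nonneg _)
  rw [hnorm]
  by_contra! hgt
  nlinarith [hdom i, abs_nonneg (g i)]

end DiagonalDominance

section Tridiagonal

variable {m : ℕ} (α β γ : Fin (m + 1) → ℝ)

lemma sum_abs_tridiag_last_row_le :
    ∑ j ∈ univ.erase (Fin.last m), |tridiag α β γ (Fin.last m) j| ≤ |β (Fin.last m)| := by
  have hentry : ∀ j ∈ univ.erase (Fin.last m),
      |tridiag α β γ (Fin.last m) j| = if (j : ℕ) + 1 = m then |β (Fin.last m)| else 0 := by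
    intro j hj
    have hjm : (j : ℕ) ≠ m := fun h => ne_of_mem_erase hj (Fin.ext h)
    simp only [tridiag, of_apply, Fin.val_last]
    split_ifs <;> first | omega | simp
  rw [sum_congr rfl hentry, sum_ite, sum_const_zero, add_zero, sum_const, nsmul_eq_mul]
  refine mul_le_of_le_one_left (abs_nonneg _) ?_
  exact_mod_cast card_le_one.2 fun a ha b hb => Fin.ext (by simp at ha hb; omega)

lemma norm_tridiag_inv_mulVec_single_le_one {r : ℝ} (hr : 0 < r)
    (hμ : logMaxNorm (r • (1 : Matrix (Fin (m + 1)) (Fin (m + 1)) ℝ) + tridiag α β γ) ≤ 0)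
    (hlast : r + α (Fin.last m) + |β (Fin.last m)| + |γ (Fin.last m)| ≤ 0) :
    ‖(tridiag α β γ)⁻¹ *ᵥ Pi.single (Fin.last m) (γ (Fin.last m))‖ ≤ 1 := by
  have hdet : IsUnit (tridiag α β γ).det :=
    isUnit_iff_ne_zero.2 (det_ne_zero_of_logMaxNorm_nonpos hr hμ)
  refine norm_le_one_of_mulVec_eq (by rw [mulVec_mulVec, mul_nonsing_inv _ hdet, one_mulVec])
    fun i => ?_
  by_cases hi : i = Fin.last m
  · subst hi
    have hdiag : tridiag α β γ (Fin.last m) (Fin.last m) = α (Fin.last m) := by simp [tridiag]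
    rw [Pi.single_eq_same, hdiag]
    linarith [sum_abs_tridiag_last_row_le α β γ, neg_le_abs (α (Fin.last m))]
  · rw [Pi.single_eq_of_ne hi, abs_zero, zero_add]
    linarith [add_diag_add_sum_abs_nonpos_of_logMaxNorm hμ i, neg_le_abs (tridiag α β γ i i)]

end Tridiagonal

namespace IsIdempotentElem

section Algebra

variable {𝕜 R : Type*} [CommRing 𝕜] [Ring R] [Algebra 𝕜 R] {p : R}

theorem one_add_sub_one_smul_mul (hp : IsIdempotentElem p) (a b : 𝕜) :
    (1 + (a - 1) • p) * (1 + (b - 1) • p) = 1 + (a * b - 1) • p := by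
  simp only [mul_add, add_mul, one_mul, mul_one, smul_mul_smul, hp.eq]
  module

theorem one_add_sub_one_smul_pow (hp : IsIdempotentElem p) (a : 𝕜) (n : ℕ) :
    (1 + (a - 1) • p) ^ n = 1 + (a ^ n - 1) • p := by
  induction n with
  | zero => simp
  | succ n ih => rw [pow_succ, ih, hp.one_add_sub_one_smul_mul, pow_succ]

end Algebra

variable {κ : Type*} [Fintype κ] [DecidableEq κ] {P : Matrix κ κ ℝ}

theorem one_add_sub_one_smul_mul_inv (hP : IsIdempotentElem P) {a : ℝ} (ha : a ≠ 0) :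
    (1 + (a - 1) • P) * (1 + (a⁻¹ - 1) • P) = 1 := by
  rw [hP.one_add_sub_one_smul_mul, mul_inv_cancel₀ ha, sub_self, zero_smul, add_zero]

theorem inv_one_add_sub_one_smul (hP : IsIdempotentElem P) {a : ℝ} (ha : a ≠ 0) :
    (1 + (a - 1) • P)⁻¹ = 1 + (a⁻¹ - 1) • P :=
  inv_eq_right_inv (hP.one_add_sub_one_smul_mul_inv ha)

theorem isUnit_det_one_add_sub_one_smul (hP : IsIdempotentElem P) {a : ℝ} (ha : a ≠ 0) :
    IsUnit (1 + (a - 1) • P).det :=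
  isUnit_det_of_right_inverse (hP.one_add_sub_one_smul_mul_inv ha)

theorem phiM_smul (hP : IsIdempotentElem P) (θ dt c : ℝ) (hc : 1 - θ * dt * c ≠ 0) :
    phiM θ dt (c • P) = 1 + ((1 + (1 - θ) * dt * c) / (1 - θ * dt * c) - 1) • P := by
  have hden : 1 - (θ * dt) • (c • P) = 1 + ((1 - θ * dt * c) - 1) • P := by module
  have hnum : 1 + ((1 - θ) * dt) • (c • P) = 1 + ((1 + (1 - θ) * dt * c) - 1) • P := by module
  rw [phiM, hden, hnum, hP.inv_one_add_sub_one_smul hc, hP.one_add_sub_one_smul_mul,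
    inv_mul_eq_div]

end IsIdempotentElem

section Theta

variable {ι κ : Type*} [Fintype ι] [DecidableEq ι] [Fintype κ] [DecidableEq κ] (θ dt : ℝ)

lemma phiM_sub_one {X : Matrix ι ι ℝ} (hX : IsUnit (1 - (θ * dt) • X).det) :
    phiM θ dt X - 1 = dt • ((1 - (θ * dt) • X)⁻¹ * X) := by
  set X' := 1 - (θ * dt) • X
  calc phiM θ dt X - 1 = X'⁻¹ * (1 + ((1 - θ) * dt) • X) - X'⁻¹ * X' := by
        rw [nonsing_inv_mul _ hX]; rfl
    _ = X'⁻¹ * (dt • X) := by rw [← Matrix.mul_sub]; congr 1; module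
    _ = dt • (X'⁻¹ * X) := Matrix.mul_smul _ _ _

lemma phiM_fromBlocks_zero₂₁ {A : Matrix ι ι ℝ} (B : Matrix ι κ ℝ) {C : Matrix κ κ ℝ}
    (hA : IsUnit (1 - (θ * dt) • A).det) (hC : IsUnit (1 - (θ * dt) • C).det) :
    phiM θ dt (fromBlocks A B 0 C) = fromBlocks (phiM θ dt A)
      (dt • ((1 - (θ * dt) • A)⁻¹ * B * (1 - (θ * dt) • C)⁻¹)) 0 (phiM θ dt C) := by
  have hden : 1 - (θ * dt) • fromBlocks A B 0 C =
      fromBlocks (1 - (θ * dt) • A) (-(θ * dt) • B) 0 (1 - (θ * dt) • C) := by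
    ext (i | i) (j | j) <;> simp [one_apply, sub_eq_add_neg]
  have hnum : 1 + ((1 - θ) * dt) • fromBlocks A B 0 C =
      fromBlocks (1 + ((1 - θ) * dt) • A) (((1 - θ) * dt) • B) 0 (1 + ((1 - θ) * dt) • C) := by
    ext (i | i) (j | j) <;> simp [one_apply]
  set C' := 1 - (θ * dt) • C
  have hinv : C'⁻¹ = 1 + (θ * dt) • (C'⁻¹ * C) :=
    calc C'⁻¹ = C'⁻¹ * (C' + (θ * dt) • C) := by simp [C']
      _ = _ := by rw [Matrix.mul_add, nonsing_inv_mul _ hC, Matrix.mul_smul]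
  have hCnum : C'⁻¹ * (1 + ((1 - θ) * dt) • C) = 1 + dt • (C'⁻¹ * C) := by
    rw [Matrix.mul_add, Matrix.mul_one, Matrix.mul_smul]
    nth_rewrite 1 [hinv]
    rw [add_assoc, ← add_smul]
    congr 2
    ring
  rw [phiM, hden, hnum, inv_fromBlocks_zero₂₁_of_isUnit_iff _ _ _ (by
    simp only [isUnit_iff_isUnit_det, hA, hC]), fromBlocks_multiply]
  congr 1
  · simp [phiM]
  · simp only [Matrix.mul_smul, Matrix.smul_mul, neg_smul, Matrix.mul_neg, Matrix.neg_mul,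
      neg_neg, Matrix.mul_assoc, hCnum]
    rw [show B * C'⁻¹ = B * (1 + (θ * dt) • (C'⁻¹ * C)) from congrArg _ hinv]
    simp only [Matrix.mul_add, Matrix.mul_smul, Matrix.mul_one]
    module
  · simp
  · simp [phiM, C']

end Theta

section BlockPower

variable {ι κ : Type*} [Fintype ι] [DecidableEq ι] [Fintype κ] [DecidableEq κ]

lemma fromBlocks_zero₂₁_pow {R : Type*} [Ring R] {P : Matrix ι ι R} {F : Matrix ι κ R}
    {Q : Matrix κ κ R} {T : ℕ → Matrix ι κ R} (h0 : T 0 = 0)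
    (hsucc : ∀ n, T (n + 1) = P ^ n * F + T n * Q) (n : ℕ) :
    fromBlocks P F 0 Q ^ n = fromBlocks (P ^ n) (T n) 0 (Q ^ n) := by
  induction n with
  | zero => simp [h0, fromBlocks_one]
  | succ n ih => simp [pow_succ, ih, fromBlocks_multiply, hsucc, add_comm]

def dampedSum {E : Type*} [AddCommGroup E] [Module ℝ E] (x c : ℝ) (w : ℕ → E) : ℕ → E
  | 0 => 0
  | n + 1 => x • dampedSum x c w n + c • w n

lemma norm_dampedSum_le {E : Type*} [SeminormedAddCommGroup E] [NormedSpace ℝ E] {x c L : ℝ}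
    (hxc : |x| + |c| ≤ 1) (hL : 0 ≤ L) {w : ℕ → E} {n : ℕ} (hw : ∀ k < n, ‖w k‖ ≤ L) :
    ‖dampedSum x c w n‖ ≤ L := by
  induction n with
  | zero => simpa [dampedSum] using hL
  | succ n ih =>
    have hd := ih fun k hk => hw k (by omega)
    calc ‖dampedSum x c w (n + 1)‖ ≤ |x| * L + |c| * L := by
          refine (norm_add_le _ _).trans (add_le_add ?_ ?_) <;> rw [norm_smul, Real.norm_eq_abs]
          · exact mul_le_mul_of_nonneg_left hd (abs_nonneg x)
          · exact mul_le_mul_of_nonneg_left (hw n n.lt_succ_self) (abs_nonneg c)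
      _ ≤ L := by nlinarith

lemma fromBlocks_vecMulVec_pow (P : Matrix ι ι ℝ) (v : ι → ℝ) {π ρ : κ → ℝ} {x y : ℝ}
    (hπ : π ⬝ᵥ 1 = 1) (hρ : ρ ⬝ᵥ 1 = y) (n : ℕ) :
    fromBlocks P (vecMulVec ((P - 1) *ᵥ v) ρ) 0 (1 + (x - 1) • vecMulVec (1 : κ → ℝ) π) ^ n =
      fromBlocks (P ^ n) (vecMulVec (P ^ n *ᵥ v - v) ρ -
          vecMulVec (dampedSum x (y * (1 - x)) (fun k => P ^ k *ᵥ v - v) n) π) 0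
        ((1 + (x - 1) • vecMulVec (1 : κ → ℝ) π) ^ n) := by
  apply fromBlocks_zero₂₁_pow
  · simp [dampedSum]
  intro k
  have hu : P ^ k *ᵥ ((P - 1) *ᵥ v) = (P ^ (k + 1) *ᵥ v - v) - (P ^ k *ᵥ v - v) := by
    rw [mulVec_mulVec, Matrix.mul_sub, Matrix.mul_one, ← pow_succ, sub_mulVec]
    abel
  have hvecMul : ∀ σ : κ → ℝ, σ ᵥ* (1 + (x - 1) • vecMulVec (1 : κ → ℝ) π) =
      σ + ((x - 1) * (σ ⬝ᵥ 1)) • π := fun σ => by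
    rw [vecMul_add, vecMul_one, vecMul_smul, vecMul_vecMulVec, smul_smul]
  rw [mul_vecMulVec, hu, Matrix.sub_mul, vecMulVec_mul, vecMulVec_mul, hvecMul, hvecMul, hρ, hπ]
  ext i j
  simp only [dampedSum, Matrix.sub_apply, Matrix.add_apply, vecMulVec_apply, Pi.add_apply,
    Pi.sub_apply, Pi.smul_apply, smul_eq_mul]
  ring

end BlockPower

section RankOneBlock

variable {ι κ : Type*} [Fintype ι] [Fintype κ]

lemma isIdempotentElem_vecMulVec_one {π : κ → ℝ} (hπ : π ⬝ᵥ 1 = 1) :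
    IsIdempotentElem (vecMulVec (1 : κ → ℝ) π) := by
  rw [IsIdempotentElem, vecMulVec_mul_vecMulVec, hπ, one_smul]

variable [DecidableEq ι] [DecidableEq κ]

lemma phiM_fromBlocks_vecMulVec (θ dt c : ℝ) {A : Matrix ι ι ℝ} (v : ι → ℝ) (e : κ → ℝ)
    {π : κ → ℝ} (hπ : π ⬝ᵥ 1 = 1) (hA : IsUnit (1 - (θ * dt) • A).det)
    (hc : 1 - θ * dt * c ≠ 0) :
    phiM θ dt (fromBlocks A (vecMulVec (A *ᵥ v) e) 0 (c • vecMulVec 1 π)) =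
      fromBlocks (phiM θ dt A)
        (vecMulVec ((phiM θ dt A - 1) *ᵥ v) (e + (((1 - θ * dt * c)⁻¹ - 1) * (e ⬝ᵥ 1)) • π)) 0
        (1 + ((1 + (1 - θ) * dt * c) / (1 - θ * dt * c) - 1) • vecMulVec 1 π) := by
  have hP := isIdempotentElem_vecMulVec_one hπ
  have hden : 1 - (θ * dt) • (c • vecMulVec (1 : κ → ℝ) π) =
      1 + ((1 - θ * dt * c) - 1) • vecMulVec 1 π := by module
  rw [phiM_fromBlocks_zero₂₁ θ dt _ hA (by rw [hden]; exact hP.isUnit_det_one_add_sub_one_smul hc),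
    hP.phiM_smul θ dt c hc, hden, hP.inv_one_add_sub_one_smul hc, phiM_sub_one θ dt hA]
  congr 1
  rw [mul_vecMulVec, vecMulVec_mul, vecMul_add, vecMul_one, vecMul_smul, vecMul_vecMulVec,
    smul_smul, ← smul_vecMulVec, smul_mulVec, mulVec_mulVec]

end RankOneBlock

lemma abs_phi_add_abs_inv_mul_le_one {θ r dt : ℝ} (hθ : 1 / 2 ≤ θ) (hr : 0 < r) (hdt : 0 < dt) :
    |(1 - (1 - θ) * r * dt) / (1 + θ * r * dt)| +
      |(1 + θ * r * dt)⁻¹ * (1 - (1 - (1 - θ) * r * dt) / (1 + θ * r * dt))| ≤ 1 := by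
  have ha : 0 < r * dt := mul_pos hr hdt
  have hD : 0 < 1 + θ * r * dt := by nlinarith
  set x := (1 - (1 - θ) * r * dt) / (1 + θ * r * dt)
  have hc : (1 + θ * r * dt)⁻¹ * (1 - x) = r * dt / (1 + θ * r * dt) ^ 2 := by
    simp only [x]; field_simp; ring
  have hpos : 1 - (x + r * dt / (1 + θ * r * dt) ^ 2) =
      θ * (r * dt) ^ 2 / (1 + θ * r * dt) ^ 2 := by
    simp only [x]; field_simp; ring
  have hneg : 1 - (-x + r * dt / (1 + θ * r * dt) ^ 2) =
      (2 + 2 * (2 * θ - 1) * (r * dt) + (2 * θ - 1) * θ * (r * dt) ^ 2) / (1 + θ * r * dt) ^ 2 := by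
    simp only [x]; field_simp; ring
  have hθ0 : 0 ≤ θ := by linarith
  have hθ1 : 0 ≤ 2 * θ - 1 := by linarith
  rw [hc, abs_of_nonneg (a := r * dt / (1 + θ * r * dt) ^ 2) (by positivity)]
  rcases abs_cases x with ⟨habs, -⟩ | ⟨habs, -⟩ <;> rw [habs, ← sub_nonneg]
  · rw [hpos]; positivity
  · rw [hneg]; positivity

section TwoColumns

variable {a b : ℝ} (ha : 0 ≤ a) (hb : 0 ≤ b)
include ha hb

lemma sum_abs_one_add_smul_vecMulVec_apply_one {z : ℝ} (hz : z ≤ 1) :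
    ∑ j, |(1 + (z - 1) • vecMulVec (1 : Fin 2 → ℝ) ![a, -b]) 1 j| = 1 + (1 - z) * (a + b) := by
  have e0 : (1 + (z - 1) • vecMulVec (1 : Fin 2 → ℝ) ![a, -b]) 1 0 = (z - 1) * a := by
    simp
  have e1 : (1 + (z - 1) • vecMulVec (1 : Fin 2 → ℝ) ![a, -b]) 1 1 = 1 + (1 - z) * b := by
    simp; ring
  rw [Fin.sum_univ_two, e0, e1, abs_of_nonpos (by nlinarith), abs_of_nonneg (by nlinarith)]
  ring

lemma sum_abs_one_add_smul_vecMulVec_apply_le {z : ℝ} (hz : z ≤ 1) (l : Fin 2) :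
    ∑ j, |(1 + (z - 1) • vecMulVec (1 : Fin 2 → ℝ) ![a, -b]) l j| ≤ 1 + (1 - z) * (a + b) := by
  obtain rfl | rfl : l = 0 ∨ l = 1 := by fin_cases l <;> simp
  · have e0 : (1 + (z - 1) • vecMulVec (1 : Fin 2 → ℝ) ![a, -b]) 0 0 = 1 - (1 - z) * a := by
      simp; ring
    have e1 : (1 + (z - 1) • vecMulVec (1 : Fin 2 → ℝ) ![a, -b]) 0 1 = (1 - z) * b := by
      simp; ring
    have hza : 0 ≤ (1 - z) * a := by nlinarith
    rw [Fin.sum_univ_two, e0, e1, abs_of_nonneg (a := (1 - z) * b) (by nlinarith)]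
    have h0 := abs_sub (1 : ℝ) ((1 - z) * a)
    rw [abs_one, abs_of_nonneg hza] at h0
    linarith
  · exact (sum_abs_one_add_smul_vecMulVec_apply_one ha hb hz).le

lemma sum_abs_vecMulVec_sub_vecMulVec_apply_le {ι : Type*} (w d : ι → ℝ) (t : ℝ) (i : ι) :
    ∑ l, |(vecMulVec w (![1, 0] + t • ![a, -b]) - vecMulVec d ![a, -b] :
      Matrix ι (Fin 2) ℝ) i l| ≤ |w i| + |d i - t * w i| * (a + b) := by
  have e0 : (vecMulVec w (![1, 0] + t • ![a, -b]) - vecMulVec d ![a, -b] : Matrix ι (Fin 2) ℝ) i 0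
      = w i - (d i - t * w i) * a := by
    simp; ring
  have e1 : (vecMulVec w (![1, 0] + t • ![a, -b]) - vecMulVec d ![a, -b] : Matrix ι (Fin 2) ℝ) i 1
      = (d i - t * w i) * b := by
    simp; ring
  have h0 := abs_sub (w i) ((d i - t * w i) * a)
  rw [abs_mul, abs_of_nonneg ha] at h0
  rw [Fin.sum_univ_two, e0, e1, abs_mul, abs_of_nonneg hb]
  linarith

lemma le_matMaxNorm_fromBlocks_one_add_smul_vecMulVec {ι : Type*} [Fintype ι] (X : Matrix ι ι ℝ)
    (Y : Matrix ι (Fin 2) ℝ) {z : ℝ} (hz : z ≤ 1) :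
    z + (1 - z) * (a + b + 1) ≤
      matMaxNorm (fromBlocks X Y 0 (1 + (z - 1) • vecMulVec (1 : Fin 2 → ℝ) ![a, -b])) :=
  calc z + (1 - z) * (a + b + 1) = 1 + (1 - z) * (a + b) := by ring
    _ = _ := (sum_abs_one_add_smul_vecMulVec_apply_one ha hb hz).symm
    _ ≤ _ := sum_abs_le_matMaxNorm_fromBlocks _ _ _ 1

lemma matMaxNorm_fromBlocks_vecMulVec_le {ι : Type*} [Fintype ι] [Nonempty ι] {X : Matrix ι ι ℝ}
    {w d : ι → ℝ} {t z K : ℝ} (ht : |t| ≤ 1) (hz : |z| ≤ 1) (hX : matMaxNorm X ≤ K)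
    (hw : ‖w‖ ≤ K + 1) (hd : ‖d‖ ≤ K + 1) :
    matMaxNorm (fromBlocks X (vecMulVec w (![1, 0] + t • ![a, -b]) - vecMulVec d ![a, -b]) 0
      (1 + (z - 1) • vecMulVec (1 : Fin 2 → ℝ) ![a, -b])) ≤ K + 2 * (K + 1) * (a + b + 1) := by
  have hK : 0 ≤ K := (matMaxNorm_nonneg X).trans hX
  refine matMaxNorm_fromBlocks_le (fun i => ?_) fun l => ?_
  · have hwi : |w i| ≤ K + 1 := (norm_le_pi_norm w i).trans hw
    have hdi : |d i| ≤ K + 1 := (norm_le_pi_norm d i).trans hd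
    have htw : |t * w i| ≤ K + 1 := by
      rw [abs_mul]; exact (mul_le_of_le_one_left (abs_nonneg _) ht).trans hwi
    have he : |d i - t * w i| * (a + b) ≤ 2 * (K + 1) * (a + b) :=
      mul_le_mul_of_nonneg_right ((abs_sub _ _).trans (by linarith)) (add_nonneg ha hb)
    have := sum_abs_vecMulVec_sub_vecMulVec_apply_le ha hb w d t i
    have := (sum_abs_le_matMaxNorm X i).trans hX
    nlinarith
  · have := sum_abs_one_add_smul_vecMulVec_apply_le ha hb (abs_le.1 hz).2 l
    nlinarith [abs_le.1 hz]

end TwoColumns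

lemma Bmat_eq_vecMulVec {m : ℕ} (g : ℝ) :
    Bmat (m := m) g = vecMulVec (Pi.single (Fin.last m) g) ![1, 0] := by
  ext i j
  fin_cases j <;> by_cases hi : i = Fin.last m <;> simp [Bmat, vecMulVec_apply, hi]

lemma Cmat_eq_smul_vecMulVec (r spen S h : ℝ) :
    Cmat r spen S h = (-r) • vecMulVec (1 : Fin 2 → ℝ) ![S / h, -(spen / h)] := by
  ext i j
  fin_cases j <;> simp [Cmat] <;> ring

lemma phiM_fromBlocks_Cmat_pow {ι : Type*} [Fintype ι] [DecidableEq ι] {θ r dt spen S : ℝ}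
    (hθ : 0 ≤ θ) (hr : 0 < r) (hdt : 0 < dt) (hsS : spen < S) {A : Matrix ι ι ℝ}
    (hμ : logMaxNorm (r • (1 : Matrix ι ι ℝ) + A) ≤ 0) (g : ι → ℝ) (n : ℕ) :
    phiM θ dt (fromBlocks A (vecMulVec g ![1, 0]) 0 (Cmat r spen S (S - spen))) ^ n =
      fromBlocks (phiM θ dt A ^ n)
        (vecMulVec (phiM θ dt A ^ n *ᵥ (A⁻¹ *ᵥ g) - A⁻¹ *ᵥ g)
            (![1, 0] + ((1 + θ * r * dt)⁻¹ - 1) • ![S / (S - spen), -(spen / (S - spen))]) -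
          vecMulVec (dampedSum ((1 - (1 - θ) * r * dt) / (1 + θ * r * dt))
              ((1 + θ * r * dt)⁻¹ * (1 - (1 - (1 - θ) * r * dt) / (1 + θ * r * dt)))
              (fun k => phiM θ dt A ^ k *ᵥ (A⁻¹ *ᵥ g) - A⁻¹ *ᵥ g) n)
            ![S / (S - spen), -(spen / (S - spen))]) 0
        (1 + (((1 - (1 - θ) * r * dt) / (1 + θ * r * dt)) ^ n - 1) •
          vecMulVec 1 ![S / (S - spen), -(spen / (S - spen))]) := by
  have hh : S - spen ≠ 0 := sub_ne_zero.2 hsS.ne'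
  have hπ : ![S / (S - spen), -(spen / (S - spen))] ⬝ᵥ 1 = 1 := by
    simp [dotProduct, Fin.sum_univ_two]; field_simp; ring
  have hc : 1 - θ * dt * -r ≠ 0 := by nlinarith [mul_nonneg (mul_nonneg hθ hdt.le) hr.le]
  have hA : IsUnit A.det := isUnit_iff_ne_zero.2 (det_ne_zero_of_logMaxNorm_nonpos hr hμ)
  have hA' : IsUnit (1 - (θ * dt) • A).det :=
    isUnit_iff_ne_zero.2 (det_one_sub_smul_ne_zero_of_logMaxNorm_nonpos hr hμ (by positivity))
  have hx : (1 + (1 - θ) * dt * -r) / (1 - θ * dt * -r) =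
      (1 - (1 - θ) * r * dt) / (1 + θ * r * dt) := by ring
  have hy : ((1 - θ * dt * -r)⁻¹ - 1) * (![1, 0] ⬝ᵥ (1 : Fin 2 → ℝ)) =
      (1 + θ * r * dt)⁻¹ - 1 := by simp [dotProduct, Fin.sum_univ_two]; ring
  have hρ : (![1, 0] + ((1 + θ * r * dt)⁻¹ - 1) • ![S / (S - spen), -(spen / (S - spen))]) ⬝ᵥ 1 =
      (1 + θ * r * dt)⁻¹ := by
    rw [add_dotProduct, smul_dotProduct, hπ]; simp [dotProduct, Fin.sum_univ_two]
  have hg : A *ᵥ (A⁻¹ *ᵥ g) = g := by rw [mulVec_mulVec, mul_nonsing_inv _ hA, one_mulVec]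
  conv_lhs => rw [← hg]
  rw [Cmat_eq_smul_vecMulVec, phiM_fromBlocks_vecMulVec θ dt (-r) _ _ hπ hA' hc, hx, hy,
    fromBlocks_vecMulVec_pow _ _ hπ hρ,
    (isIdempotentElem_vecMulVec_one hπ).one_add_sub_one_smul_pow]

theorem statement16_general (m : ℕ) (r spen S T : ℝ) (hr : 0 < r) (hT : 0 < T)
    (hspen : 0 < spen) (hsS : spen < S)
    (θ : ℝ) (hθ : θ ∈ Set.Icc (1/2 : ℝ) 1)
    (α β γ : Fin (m + 1) → ℝ)
    (A : Matrix (Fin (m + 1)) (Fin (m + 1)) ℝ) (hA : A = tridiag α β γ)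
    (B : Matrix (Fin (m + 1)) (Fin 2) ℝ) (hB : B = Bmat (γ (Fin.last m)))
    (C : Matrix (Fin 2) (Fin 2) ℝ) (hC : C = Cmat r spen S (S - spen))
    (M : Matrix (Fin (m + 1) ⊕ Fin 2) (Fin (m + 1) ⊕ Fin 2) ℝ)
    (hM : M = Matrix.fromBlocks A B 0 C)
    (hmu : logMaxNorm (r • (1 : Matrix (Fin (m + 1)) (Fin (m + 1)) ℝ) + A) ≤ 0)
    (hrow : r + α (Fin.last m) + |β (Fin.last m)| + |γ (Fin.last m)| ≤ 0)
    (K : ℝ)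
    (hK : ∀ N' : ℕ, 1 ≤ N' → ∀ n : ℕ, n ≤ N' →
      matMaxNorm ((phiM θ (T / N') A) ^ n) ≤ K) :
    ∀ N : ℕ, 1 ≤ N → ∀ n : ℕ, 1 ≤ n → n ≤ N →
      ((1 - (1 - θ) * r * (T / N)) / (1 + θ * r * (T / N))) ^ n +
          (1 - ((1 - (1 - θ) * r * (T / N)) / (1 + θ * r * (T / N))) ^ n) *
            (2 * S / (S - spen)) ≤
        matMaxNorm ((phiM θ (T / N) M) ^ n) ∧
      matMaxNorm ((phiM θ (T / N) M) ^ n) ≤ K + 4 * (K + 1) * S / (S - spen) := by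
  intro N hN n _ hnN
  subst hA hB hC hM
  have hdt : 0 < T / N := div_pos hT (by exact_mod_cast hN)
  have hD : 1 ≤ 1 + θ * r * (T / N) := by nlinarith [hθ.1, mul_pos hr hdt]
  have hh : 0 < S - spen := sub_pos.2 hsS
  have ha : 0 ≤ S / (S - spen) := (div_pos (hspen.trans hsS) hh).le
  have hb : 0 ≤ spen / (S - spen) := (div_pos hspen hh).le
  have hxc := abs_phi_add_abs_inv_mul_le_one hθ.1 hr hdt
  have hx : |((1 - (1 - θ) * r * (T / N)) / (1 + θ * r * (T / N))) ^ n| ≤ 1 := by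
    rw [abs_pow]
    exact pow_le_one₀ (abs_nonneg _) ((le_add_of_nonneg_right (abs_nonneg _)).trans hxc)
  have ht : |(1 + θ * r * (T / N))⁻¹ - 1| ≤ 1 := abs_le.2
    ⟨by linarith [inv_pos.2 (one_pos.trans_le hD)], by linarith [inv_le_one_of_one_le₀ hD]⟩
  have hv := norm_tridiag_inv_mulVec_single_le_one α β γ hr hmu hrow
  have hw := fun k (hk : k ≤ N) => norm_mulVec_sub_le_of_norm_le_one (hK N hN k hk) hv
  have hd := norm_dampedSum_le hxc (by linarith [(matMaxNorm_nonneg _).trans (hK N hN n hnN)])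
    fun k (hk : k < n) => hw k (by omega)
  rw [Bmat_eq_vecMulVec, phiM_fromBlocks_Cmat_pow (by linarith [hθ.1]) hr hdt hsS hmu,
    show 2 * S / (S - spen) = S / (S - spen) + spen / (S - spen) + 1 by field_simp; ring,
    show 4 * (K + 1) * S / (S - spen) = 2 * (K + 1) * (S / (S - spen) + spen / (S - spen) + 1) by
      field_simp; ring]
  exact ⟨le_matMaxNorm_fromBlocks_one_add_smul_vecMulVec ha hb _ _ (abs_le.1 hx).2,
    matMaxNorm_fromBlocks_vecMulVec_le ha hb ht hx (hK N hN n hnN) (hw n hnN) hd⟩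

/-- Assume condition (2.2) and the stability assumption (6.3) hold.  Then for
`Δt = T/N` and `1 ≤ n ≤ N`:
`x^n + (1 − x^n)·2S/h ≤ ‖φ(Δt M)^n‖_∞ ≤ K + 4(K+1)S/h`, where `x = φ(−rΔt)`. -/
theorem statement16 (m : ℕ) (r spen S T : ℝ) (hr : 0 < r) (hT : 0 < T)
    (hspen : 0 < spen) (hsS : spen < S)
    (θ : ℝ) (hθ : θ ∈ Set.Icc (1/2 : ℝ) 1)
    (α β γ : Fin (m + 1) → ℝ) (hconv : m = 0 → β 0 = 0)
    (A : Matrix (Fin (m + 1)) (Fin (m + 1)) ℝ) (hA : A = tridiag α β γ)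
    (B : Matrix (Fin (m + 1)) (Fin 2) ℝ) (hB : B = Bmat (γ (Fin.last m)))
    (C : Matrix (Fin 2) (Fin 2) ℝ) (hC : C = Cmat r spen S (S - spen))
    (M : Matrix (Fin (m + 1) ⊕ Fin 2) (Fin (m + 1) ⊕ Fin 2) ℝ)
    (hM : M = Matrix.fromBlocks A B 0 C)
    (hinv : IsUnit (r • (1 : Matrix (Fin (m + 1)) (Fin (m + 1)) ℝ) + A).det)
    (hmu : logMaxNorm (r • (1 : Matrix (Fin (m + 1)) (Fin (m + 1)) ℝ) + A) ≤ 0)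
    (hrow : r + α (Fin.last m) + |β (Fin.last m)| + |γ (Fin.last m)| ≤ 0)
    (K : ℝ)
    (hK : ∀ N' : ℕ, 1 ≤ N' → ∀ n : ℕ, n ≤ N' →
      matMaxNorm ((phiM θ (T / N') A) ^ n) ≤ K) :
    ∀ N : ℕ, 1 ≤ N → ∀ n : ℕ, 1 ≤ n → n ≤ N →
      ((1 - (1 - θ) * r * (T / N)) / (1 + θ * r * (T / N))) ^ n +
          (1 - ((1 - (1 - θ) * r * (T / N)) / (1 + θ * r * (T / N))) ^ n) *
            (2 * S / (S - spen)) ≤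
        matMaxNorm ((phiM θ (T / N) M) ^ n) ∧
      matMaxNorm ((phiM θ (T / N) M) ^ n) ≤ K + 4 * (K + 1) * S / (S - spen) :=
  statement16_general m r spen S T hr hT hspen hsS θ hθ α β γ A hA B hB C hC M hM hmu hrow K hK
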